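/- Let k ≥ 3 be an integer and C = ℓ_1 ∨ ⋯ ∨ ℓ_k a clause of width k over k distinct variables. Suppose α_start and α_end are assignments that each make exactly one literal of C true, and α_start ≠ α_end. Let γ be a uniformly random assignment and, conditioned on γ, let σ_1 ∼ 𝒜(α_start ↔ γ) and σ_2 ∼ 𝒜(γ ↔ α_end) be independent uniformly random irredundant reconfiguration sequences. Then, with K := k - 2, P[σ_1 ∘ σ_2 satisfies C] = Σ_{j=0}^{K} (1/4) · (binom(K,j)/2^K) · [ (j/(j+1))^2 + (j+1)/(j+2) + (j+1)/(j+2) + 1 ], and this quantity is at least 1 - 1/(k-1) - 1/k. -/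

import Mathlib

/-- A literal is a variable together with a polarity (`true` = positive);
a clause is a disjunction of literals, represented as the list of its literals
(its width is the length of this list). -/
abbrev Clause (V : Type) := List (V × Bool)

/-- An assignment satisfies a clause if it makes at least one literal true. -/
def satClause {V : Type} (α : V → Bool) (C : Clause V) : Bool :=
  C.any fun l => α l.1 == l.2

/-- The irredundant reconfiguration sequence from `α` towards `β` obtained by flipping the
variables listed in `l` one by one (each flip sets the variable to its value under `β`);
it starts at `α` and, if `l` enumerates all variables where `α` and `β` differ, ends at `β`. -/
def flipSeq {V : Type} [DecidableEq V] (α β : V → Bool) (l : List V) : List (V → Bool) :=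
  l.scanl (fun g v => Function.update g v (β v)) α

/-- The set of orderings of `α △ β` (the variables on which `α` and `β` differ);
these are in one-to-one correspondence with the irredundant reconfiguration sequences
`𝒜(α ↔ β)` from `α` to `β`, via `flipSeq`. -/
noncomputable def orders {V : Type} [Fintype V] [DecidableEq V] (α β : V → Bool) : Finset (List V) :=
  ((Finset.univ.filter fun v => α v ≠ β v).toList.permutations).toFinset

/-- The probability that a random reconfiguration sequence from `s` to `e`, uniformly
distributed over `𝒜(s ↔ γ ↔ e)` for a uniformly random assignment `γ` (equivalently, the
concatenation `σ₁ ∘ σ₂` of independent uniformly random irredundant sequences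
`σ₁ ∼ 𝒜(s ↔ γ)` and `σ₂ ∼ 𝒜(γ ↔ e)`), satisfies the clause `C`, i.e. that every
assignment in the sequence satisfies `C`. -/
noncomputable def probSatPair {k : ℕ} (C : Clause (Fin k)) (s e : Fin k → Bool) : ℝ :=
  (∑ γ : Fin k → Bool,
      (((orders s γ ×ˢ orders γ e).filter fun p =>
            (flipSeq s γ p.1 ++ flipSeq γ e p.2).all fun α => satClause α C).card : ℝ) /
        ((orders s γ ×ˢ orders γ e).card : ℝ)) / 2 ^ k

/-!
The clause is falsified by exactly one assignment `β₀`, and `s`, `e` are `β₀` with a single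
variable flipped, `a` and `b` respectively (`a ≠ b` since `s ≠ e`). Fix `γ` and let `S` be the set
where `γ` differs from `β₀`. The sequence `σ₁` meets `β₀` exactly when it flips `a` first, which
has probability `1 / (|S| + 1)` if `a ∉ S` and `0` otherwise; reading `σ₂` backwards, the same holds
for `σ₂` and `b`. The two events are independent, and sorting the sets `S` by whether they contain
`a` and `b`, with `j = |S \ {a, b}|` binomially distributed, gives the formula.

For the bound, the bracket is at least `4 - 2 / (j + 1) - 2 / (j + 2)`. By Pascal's rule, the
average of `1 / (J + 1)` and `1 / (J + 2)` for `J ∼ Bin(K, 1/2)` is `E[1 / (J' + 1)]` for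
`J' ∼ Bin(K + 1, 1/2)`, which is less than `2 / (K + 2)`.
-/

open Finset

lemma Bool.eq_of_ne_of_ne {x y z : Bool} (hy : x ≠ y) (hz : x ≠ z) : y = z := by
  cases x <;> cases y <;> cases z <;> simp_all

section FlipSequences

variable {V : Type} [DecidableEq V]

lemma mem_flipSeq_iff {α β δ : V → Bool} {l : List V} :
    δ ∈ flipSeq α β l ↔ ∃ t r, t ++ r = l ∧ δ = fun v => if v ∈ t then β v else α v := by
  induction l generalizing α with
  | nil => simp [flipSeq]
  | cons x l ih =>
    rw [flipSeq, List.scanl_cons, List.mem_cons, ← flipSeq, ih]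
    constructor
    · rintro (rfl | ⟨t, r, rfl, rfl⟩)
      · exact ⟨[], x :: l, rfl, by simp⟩
      · refine ⟨x :: t, r, rfl, funext fun v => ?_⟩
        by_cases hv : v = x <;> simp [hv]
    · rintro ⟨_ | ⟨y, t⟩, r, hl, rfl⟩
      · exact Or.inl (by simp)
      · obtain ⟨rfl, rfl⟩ := List.cons_eq_cons.mp hl
        refine Or.inr ⟨t, r, rfl, funext fun v => ?_⟩
        by_cases hv : v = y <;> simp [hv]

lemma mem_flipSeq_reverse_iff {α β δ : V → Bool} {l : List V} (hl : l.Nodup)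
    (hmem : ∀ v, v ∈ l ↔ α v ≠ β v) :
    δ ∈ flipSeq β α l.reverse ↔ δ ∈ flipSeq α β l := by
  have key : ∀ t r, t ++ r = l →
      ((fun v => if v ∈ r then α v else β v) = fun v => if v ∈ t then β v else α v) := by
    rintro t r rfl
    funext v
    have hdisj := List.disjoint_of_nodup_append hl
    by_cases ht : v ∈ t
    · simp [ht, List.disjoint_left.mp hdisj ht]
    · by_cases hr : v ∈ r
      · simp [ht, hr]
      · have : α v = β v := by simpa [ht, hr] using (hmem v).not
        simp [ht, hr, this]
  rw [mem_flipSeq_iff, mem_flipSeq_iff]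
  constructor
  · rintro ⟨t, r, htr, rfl⟩
    have : r.reverse ++ t.reverse = l := by rw [← List.reverse_append, htr, List.reverse_reverse]
    exact ⟨r.reverse, t.reverse, this, by simpa using key _ _ this⟩
  · rintro ⟨t, r, htr, rfl⟩
    refine ⟨r.reverse, t.reverse, by rw [← List.reverse_append, htr], ?_⟩
    simpa using (key t r htr).symm

lemma mem_flipSeq_iff_head?_eq {s γ δ : V → Bool} {a : V} {p : List V}
    (hs : ∀ v, s v ≠ δ v ↔ v = a) (hp : ∀ v ∈ p, s v ≠ γ v) :
    δ ∈ flipSeq s γ p ↔ p.head? = some a := by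
  rw [mem_flipSeq_iff]
  constructor
  · rintro ⟨t, r, rfl, rfl⟩
    have hat : a ∈ t := by
      by_contra h
      simpa [h] using (hs a).mpr rfl
    obtain ⟨y, t, rfl⟩ := List.exists_cons_of_ne_nil (List.ne_nil_of_mem hat)
    have hy : y = a := (hs y).mp (by simpa using hp y (by simp))
    simp [hy]
  · intro h
    obtain ⟨r, rfl⟩ : ∃ r, p = a :: r := by
      obtain _ | ⟨y, r⟩ := p <;> simp_all
    refine ⟨[a], r, rfl, funext fun v => ?_⟩
    by_cases hv : v = a
    · subst hv
      simpa using Bool.eq_of_ne_of_ne ((hs v).mpr rfl) (hp v (by simp))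
    · simpa [hv] using fun h => hv ((hs v).mp (Ne.symm h))

noncomputable def permsOf (D : Finset V) : Finset (List V) := D.toList.permutations.toFinset

lemma mem_permsOf {D : Finset V} {p : List V} : p ∈ permsOf D ↔ p.Nodup ∧ ∀ v, v ∈ p ↔ v ∈ D := by
  rw [permsOf, List.mem_toFinset, List.mem_permutations]
  constructor
  · intro h
    exact ⟨h.nodup_iff.mpr D.nodup_toList, fun v => by simpa using h.mem_iff⟩
  · rintro ⟨hp, hmem⟩
    exact (List.perm_ext_iff_of_nodup hp D.nodup_toList).mpr (by simpa using hmem)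

lemma card_permsOf (D : Finset V) : #(permsOf D) = (#D).factorial := by
  rw [permsOf, List.toFinset_card_of_nodup (List.nodup_permutations _ D.nodup_toList),
    List.length_permutations, Finset.length_toList]

lemma card_permsOf_filter_head?_eq {D : Finset V} {a : V} (ha : a ∈ D) :
    #{p ∈ permsOf D | p.head? = some a} = (#D - 1).factorial := by
  rw [← card_erase_of_mem ha, ← card_permsOf]
  refine card_nbij' List.tail (a :: ·) ?_ ?_ ?_ ?_
  · rintro (_ | ⟨y, p⟩) hp
    · simp at hp
    · simp only [coe_filter, Set.mem_ofPred_eq, mem_permsOf, List.nodup_cons, List.mem_cons,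
        List.head?_cons, Option.some.injEq] at hp
      obtain ⟨⟨⟨hyp, hnd⟩, hmem⟩, rfl⟩ := hp
      simp only [mem_coe, mem_permsOf, List.tail_cons, mem_erase, ← hmem]
      exact ⟨hnd, fun v => ⟨fun hv => ⟨fun h => hyp (h ▸ hv), Or.inr hv⟩,
        fun hv => hv.2.resolve_left hv.1⟩⟩
  · intro q hq
    simp only [mem_coe, mem_permsOf, mem_erase] at hq
    simp only [coe_filter, Set.mem_ofPred_eq, mem_permsOf, List.nodup_cons, List.mem_cons,
      List.head?_cons, and_true, hq.2]
    exact ⟨⟨fun h => h.1 rfl, hq.1⟩, fun v => by by_cases hv : v = a <;> simp [hv, ha]⟩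
  · rintro (_ | ⟨y, p⟩) hp
    · simp at hp
    · simp_all
  · intro q _
    rfl

lemma card_permsOf_filter_head?_ne_div (D : Finset V) (a : V) :
    (#{p ∈ permsOf D | p.head? ≠ some a} : ℝ) / #(permsOf D) =
      if a ∈ D then ((#D : ℝ) - 1) / #D else 1 := by
  split_ifs with ha
  · obtain ⟨m, hm⟩ : ∃ m, #D = m + 1 := Nat.exists_eq_add_one.mpr (card_pos.mpr ⟨a, ha⟩)
    simp_rw [ne_eq]
    rw [filter_not, card_sdiff_of_subset (filter_subset _ _),
      Nat.cast_sub (card_le_card (filter_subset _ _)), card_permsOf_filter_head?_eq ha,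
      card_permsOf, hm, Nat.add_sub_cancel, Nat.factorial_succ]
    have : (0 : ℝ) < m.factorial := by exact_mod_cast m.factorial_pos
    push_cast
    field_simp
  · have hpos : (0 : ℝ) < #(permsOf D) := by
      rw [card_permsOf]; exact_mod_cast (#D).factorial_pos
    rw [filter_true_of_mem, div_self hpos.ne']
    rintro (_ | ⟨y, p⟩) hp
    · simp
    · simp only [List.head?_cons, ne_eq, Option.some.injEq]
      rintro rfl
      exact ha ((mem_permsOf.mp hp).2 y |>.mp (by simp))
end FlipSequences

section Avoidance

variable {V : Type} [Fintype V] [DecidableEq V]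

lemma orders_eq_permsOf (α β : V → Bool) : orders α β = permsOf {v | α v ≠ β v} := rfl

lemma mem_orders {α β : V → Bool} {p : List V} :
    p ∈ orders α β ↔ p.Nodup ∧ ∀ v, v ∈ p ↔ α v ≠ β v := by
  simp [orders_eq_permsOf, mem_permsOf]

noncomputable def probAvoid (α β δ : V → Bool) : ℝ :=
  #{p ∈ orders α β | δ ∉ flipSeq α β p} / #(orders α β)

lemma probAvoid_comm (α β δ : V → Bool) : probAvoid α β δ = probAvoid β α δ := by
  have reverse_mem : ∀ {α β : V → Bool} {p}, p ∈ orders α β → p.reverse ∈ orders β α := by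
    intro α β p hp
    rw [mem_orders] at hp ⊢
    exact ⟨List.nodup_reverse.mpr hp.1, fun v => by rw [List.mem_reverse, hp.2, ne_comm]⟩
  have reverse_mem_filter : ∀ α β : V → Bool, ∀ p ∈ {p ∈ orders α β | δ ∉ flipSeq α β p},
      p.reverse ∈ {p ∈ orders β α | δ ∉ flipSeq β α p} := by
    intro α β p hp
    rw [mem_filter] at hp ⊢
    rw [mem_flipSeq_reverse_iff (mem_orders.mp hp.1).1 (mem_orders.mp hp.1).2]
    exact ⟨reverse_mem hp.1, hp.2⟩
  unfold probAvoid
  congr 2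
  · exact card_nbij' _ _ (reverse_mem_filter α β) (reverse_mem_filter β α)
      (fun p _ => p.reverse_reverse) (fun p _ => p.reverse_reverse)
  · exact card_nbij' _ _ (fun _ => reverse_mem) (fun _ => reverse_mem)
      (fun p _ => p.reverse_reverse) (fun p _ => p.reverse_reverse)

omit [Fintype V] in
/-- The probability that a uniformly random ordering of `S ∆ {a}` does not start with `a`. -/
noncomputable def avoidProb (S : Finset V) (a : V) : ℝ := if a ∈ S then 1 else #S / (#S + 1)

lemma probAvoid_eq_avoidProb {s γ δ : V → Bool} {a : V} (hs : ∀ v, s v ≠ δ v ↔ v = a) :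
    probAvoid s γ δ = avoidProb {v | δ v ≠ γ v} a := by
  have hfilter : {p ∈ orders s γ | δ ∉ flipSeq s γ p} = {p ∈ orders s γ | p.head? ≠ some a} :=
    filter_congr fun p hp =>
      (mem_flipSeq_iff_head?_eq hs fun v hv => ((mem_orders.mp hp).2 v).mp hv).not
  rw [probAvoid, hfilter, orders_eq_permsOf, card_permsOf_filter_head?_ne_div, avoidProb]
  set S : Finset V := {v | δ v ≠ γ v}
  have hsa := (hs a).mpr rfl
  by_cases haS : a ∈ S
  · have haD : a ∉ ({v | s v ≠ γ v} : Finset V) := by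
      simp only [S, mem_filter, mem_univ, true_and, not_not] at haS ⊢
      exact Bool.eq_of_ne_of_ne (Ne.symm hsa) haS
    rw [if_neg haD, if_pos haS]
  · have hD : ({v | s v ≠ γ v} : Finset V) = insert a S := by
      ext v
      by_cases hv : v = a
      · subst hv
        simp only [S, mem_filter, mem_univ, true_and, not_not] at haS
        simpa using fun h => hsa (h.trans haS.symm)
      · have : s v = δ v := not_not.mp fun h => hv ((hs v).mp h)
        simp [S, hv, this]
    rw [hD, if_pos (mem_insert_self _ _), if_neg haS, card_insert_of_notMem haS]
    push_cast
    ring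

lemma sum_assignments_eq_sum_powerset {M : Type*} [AddCommMonoid M] (δ : V → Bool)
    (G : Finset V → M) : ∑ γ : V → Bool, G {v | δ v ≠ γ v} = ∑ S ∈ univ.powerset, G S := by
  refine sum_nbij' (fun γ => ({v | δ v ≠ γ v} : Finset V)) (fun S v => if v ∈ S then !δ v else δ v)
    (by simp) (by simp) ?_ ?_ (fun _ _ => rfl)
  · intro γ _
    funext v
    by_cases h : δ v = γ v
    · simp [h]
    · simp [Bool.eq_not_of_ne h]
  · intro S _
    ext v
    by_cases h : v ∈ S <;> simp [h]

/-- `avoidCaseSum j` is the sum of `avoidProb S a * avoidProb S b` over the four sets `S` with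
`S \ {a, b}` of size `j`. -/
noncomputable def avoidCaseSum (j : ℕ) : ℝ :=
  ((j : ℝ) / ((j : ℝ) + 1)) ^ 2 + ((j : ℝ) + 1) / ((j : ℝ) + 2) +
    ((j : ℝ) + 1) / ((j : ℝ) + 2) + 1

lemma sum_powerset_avoidProb_mul_avoidProb {a b : V} (hab : a ≠ b) :
    ∑ S ∈ (univ : Finset V).powerset, avoidProb S a * avoidProb S b =
      ∑ j ∈ range (Fintype.card V - 2 + 1),
        ((Fintype.card V - 2).choose j : ℝ) * avoidCaseSum j := by
  set u : Finset V := (univ.erase a).erase b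
  have hbu : b ∉ u := notMem_erase b _
  have hau : a ∉ insert b u := by simp [u, hab]
  have huniv : univ = insert a (insert b u) := by
    rw [insert_erase (mem_erase.mpr ⟨hab.symm, mem_univ b⟩), insert_erase (mem_univ a)]
  have hcard : #u = Fintype.card V - 2 := by
    rw [card_erase_of_mem (mem_erase.mpr ⟨hab.symm, mem_univ b⟩), card_erase_of_mem (mem_univ a),
      card_univ, Nat.sub_sub]
  simp_rw [← hcard, ← nsmul_eq_mul, ← sum_powerset_apply_card, huniv,
    sum_powerset_insert hau, sum_powerset_insert hbu, ← sum_add_distrib]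
  refine sum_congr rfl fun T hT => ?_
  have haT : a ∉ T := fun h => hau (mem_insert_of_mem (mem_powerset.mp hT h))
  have hbT : b ∉ T := fun h => hbu (mem_powerset.mp hT h)
  simp only [avoidProb, avoidCaseSum, mem_insert, haT, hbT, hab, hab.symm, card_insert_of_notMem,
    or_false, false_or, if_true, if_false, not_false_eq_true]
  push_cast
  ring

end Avoidance

lemma sum_range_succ_choose_smul {M : Type*} [AddCommMonoid M] (n : ℕ) (f : ℕ → M) :
    ∑ i ∈ range (n + 2), (n + 1).choose i • f i =
      ∑ j ∈ range (n + 1), n.choose j • (f j + f (j + 1)) := by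
  have hshift : ∑ i ∈ range (n + 1), n.choose (i + 1) • f (i + 1) + f 0 =
      ∑ j ∈ range (n + 1), n.choose j • f j := by
    rw [sum_range_succ, Nat.choose_succ_self, zero_smul, add_zero, sum_range_succ' _ n]
    simp
  rw [sum_range_succ', Nat.choose_zero_right, one_smul]
  simp_rw [Nat.choose_succ_succ', add_smul, sum_add_distrib, add_assoc, hshift, smul_add,
    sum_add_distrib, add_comm]

lemma sum_range_choose_div_add_one_le (n : ℕ) :
    ∑ i ∈ range (n + 1), (n.choose i : ℝ) / (i + 1) ≤ 2 ^ (n + 1) / (n + 1) := by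
  have hterm : ∀ i, (n.choose i : ℝ) / (i + 1) = (n + 1).choose (i + 1) / (n + 1) := fun i => by
    rw [div_eq_div_iff (by positivity) (by positivity)]
    exact_mod_cast (mul_comm _ _).trans (Nat.add_one_mul_choose_eq n i)
  rw [sum_congr rfl fun i _ => hterm i, ← sum_div]
  gcongr
  have : ∑ i ∈ range (n + 1), (n + 1).choose (i + 1) ≤ 2 ^ (n + 1) := by
    rw [← Nat.sum_range_choose (n + 1), sum_range_succ' _ (n + 1)]
    exact Nat.le_add_right _ _
  exact_mod_cast this

lemma four_sub_le_avoidCaseSum (j : ℕ) :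
    4 - 2 * (1 / ((j : ℝ) + 1) + 1 / ((j : ℝ) + 2)) ≤ avoidCaseSum j := by
  have h1 : (j : ℝ) / (j + 1) = 1 - 1 / (j + 1) := by field_simp; ring
  have h2 : ((j : ℝ) + 1) / (j + 2) = 1 - 1 / (j + 2) := by field_simp; ring
  rw [avoidCaseSum, h1, h2]
  nlinarith [sq_nonneg (1 / ((j : ℝ) + 1))]

lemma one_sub_two_div_le_sum_avoidCaseSum (K : ℕ) :
    1 - 2 / ((K : ℝ) + 2) ≤
      ∑ j ∈ range (K + 1), (1 / 4 : ℝ) * ((K.choose j : ℝ) / 2 ^ K) * avoidCaseSum j := by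
  have hpascal : ∑ j ∈ range (K + 1), (K.choose j : ℝ) * (1 / ((j : ℝ) + 1) + 1 / ((j : ℝ) + 2)) ≤
      2 ^ (K + 2) / ((K : ℝ) + 2) := by
    have := sum_range_succ_choose_smul K fun i => 1 / ((i : ℝ) + 1)
    simp only [nsmul_eq_mul, Nat.cast_add, Nat.cast_one, add_assoc, one_add_one_eq_two] at this
    convert sum_range_choose_div_add_one_le (K + 1) using 1
    · simp_rw [← this, mul_one_div]
    · push_cast
      ring
  have hchoose : ∑ j ∈ range (K + 1), (K.choose j : ℝ) = 2 ^ K := by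
    exact_mod_cast Nat.sum_range_choose K
  have hsplit : ∑ j ∈ range (K + 1),
      (1 / 4 : ℝ) * ((K.choose j : ℝ) / 2 ^ K) * (4 - 2 * (1 / ((j : ℝ) + 1) + 1 / ((j : ℝ) + 2))) =
        (∑ j ∈ range (K + 1), (K.choose j : ℝ)) / 2 ^ K - (∑ j ∈ range (K + 1),
          (K.choose j : ℝ) * (1 / ((j : ℝ) + 1) + 1 / ((j : ℝ) + 2))) / 2 ^ (K + 1) := by
    rw [sum_div, sum_div, ← sum_sub_distrib]
    refine sum_congr rfl fun j _ => ?_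
    field_simp
    ring
  calc 1 - 2 / ((K : ℝ) + 2) = 1 - 2 ^ (K + 2) / ((K : ℝ) + 2) / 2 ^ (K + 1) := by
        rw [pow_succ 2 (K + 1)]
        field_simp
    _ ≤ 1 - (∑ j ∈ range (K + 1),
          (K.choose j : ℝ) * (1 / ((j : ℝ) + 1) + 1 / ((j : ℝ) + 2))) / 2 ^ (K + 1) := by
        gcongr
    _ = ∑ j ∈ range (K + 1), (1 / 4 : ℝ) * ((K.choose j : ℝ) / 2 ^ K) *
          (4 - 2 * (1 / ((j : ℝ) + 1) + 1 / ((j : ℝ) + 2))) := by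
        rw [hsplit, hchoose, div_self (pow_ne_zero K two_ne_zero)]
    _ ≤ ∑ j ∈ range (K + 1), (1 / 4 : ℝ) * ((K.choose j : ℝ) / 2 ^ K) * avoidCaseSum j := by
        gcongr with j
        exact four_sub_le_avoidCaseSum j

section Clauses

variable {V : Type}

lemma exists_mem_clause_iff [Fintype V] [DecidableEq V] {C : Clause V}
    (hw : C.length = Fintype.card V) (hnd : (C.map Prod.fst).Nodup) : ∃ β₀ : V → Bool, ∀ l, l ∈ C ↔ l.2 = !β₀ l.1 := by
  have hcov : ∀ v, ∃ b, (v, b) ∈ C := by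
    intro v
    have huniv : (C.map Prod.fst).toFinset = univ := by
      apply eq_univ_of_card
      rw [List.toFinset_card_of_nodup hnd, List.length_map, hw]
    have hv : v ∈ (C.map Prod.fst).toFinset := huniv ▸ mem_univ v
    simpa using hv
  choose pol hpol using hcov
  refine ⟨fun v => !pol v, fun l => ?_⟩
  rw [Bool.not_not]
  constructor
  · intro hl
    exact congrArg Prod.snd (List.inj_on_of_nodup_map hnd hl (hpol l.1) rfl)
  · intro h
    exact (Prod.ext rfl h : l = (l.1, pol l.1)) ▸ hpol l.1

variable {C : Clause V} {β₀ : V → Bool}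

lemma satClause_iff_ne (hC : ∀ l, l ∈ C ↔ l.2 = !β₀ l.1) (α : V → Bool) :
    satClause α C = true ↔ α ≠ β₀ := by
  rw [satClause, List.any_eq_true, Ne, funext_iff]
  push Not
  constructor
  · rintro ⟨l, hl, hα⟩
    refine ⟨l.1, fun h => ?_⟩
    rw [(hC l).mp hl, h] at hα
    simp at hα
  · rintro ⟨v, hv⟩
    exact ⟨(v, !β₀ v), (hC _).mpr rfl, by simpa using Bool.eq_not_of_ne hv⟩

lemma exists_forall_ne_iff_of_length_filter_eq_one (hC : ∀ l, l ∈ C ↔ l.2 = !β₀ l.1)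
    {α : V → Bool} (h : (C.filter fun l => α l.1 == l.2).length = 1) :
    ∃ a, ∀ v, α v ≠ β₀ v ↔ v = a := by
  obtain ⟨l₀, hl₀⟩ := List.length_eq_one_iff.mp h
  have hmem : ∀ v, α v ≠ β₀ v ↔ (v, !β₀ v) ∈ C.filter fun l => α l.1 == l.2 := fun v => by
    simp [List.mem_filter, hC, Bool.eq_not (a := α v)]
  refine ⟨l₀.1, fun v => ?_⟩
  rw [hmem, hl₀, List.mem_singleton]
  constructor
  · rintro rfl
    rfl
  · rintro rfl
    have hl₀C : l₀ ∈ C := (List.mem_filter.mp (hl₀ ▸ List.mem_singleton_self l₀)).1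
    exact Prod.ext rfl ((hC l₀).mp hl₀C).symm

lemma eq_of_forall_ne_iff {s e : V → Bool} {a : V} (hs : ∀ v, s v ≠ β₀ v ↔ v = a)
    (he : ∀ v, e v ≠ β₀ v ↔ v = a) : s = e := by
  funext v
  by_cases hv : v = a
  · exact Bool.eq_of_ne_of_ne (Ne.symm ((hs v).mpr hv)) (Ne.symm ((he v).mpr hv))
  · exact (not_not.mp fun h => hv ((hs v).mp h)).trans (not_not.mp fun h => hv ((he v).mp h)).symm

end Clauses

lemma probSatPair_eq_sum_powerset {k : ℕ} {C : Clause (Fin k)} {β₀ s e : Fin k → Bool} {a b : Fin k}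
    (hsat : ∀ α, satClause α C = true ↔ α ≠ β₀)
    (hs : ∀ v, s v ≠ β₀ v ↔ v = a) (he : ∀ v, e v ≠ β₀ v ↔ v = b) :
    probSatPair C s e = (∑ S ∈ univ.powerset, avoidProb S a * avoidProb S b) / 2 ^ k := by
  have hall : ∀ l : List (Fin k → Bool), (l.all fun α => satClause α C) = true ↔ β₀ ∉ l := by
    intro l
    simp only [List.all_eq_true, hsat]
    exact ⟨fun h hl => h _ hl rfl, fun h α hα hαβ => h (hαβ ▸ hα)⟩
  rw [probSatPair, ← sum_assignments_eq_sum_powerset β₀ fun S => avoidProb S a * avoidProb S b]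
  congr 1
  refine sum_congr rfl fun γ _ => ?_
  rw [← probAvoid_eq_avoidProb hs, ← probAvoid_eq_avoidProb he, ← probAvoid_comm γ e, probAvoid,
    probAvoid, div_mul_div_comm, ← Nat.cast_mul, ← Nat.cast_mul, ← card_product, ← card_product,
    ← filter_product]
  congr 3
  ext p
  simp only [List.all_append, Bool.and_eq_true, hall]

theorem stmt3_general {k : ℕ} (C : Clause (Fin k))
    (hw : C.length = k) (hnd : (C.map Prod.fst).Nodup)
    (s e : Fin k → Bool)
    (hs : (C.filter fun l => s l.1 == l.2).length = 1)
    (he : (C.filter fun l => e l.1 == l.2).length = 1)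
    (hne : s ≠ e) :
    probSatPair C s e =
      ∑ j ∈ Finset.range (k - 2 + 1),
        (1 / 4 : ℝ) * (((k - 2).choose j : ℝ) / 2 ^ (k - 2)) *
          (((j : ℝ) / ((j : ℝ) + 1)) ^ 2 + ((j : ℝ) + 1) / ((j : ℝ) + 2) +
            ((j : ℝ) + 1) / ((j : ℝ) + 2) + 1) ∧
    1 - 1 / ((k : ℝ) - 1) - 1 / (k : ℝ) ≤ probSatPair C s e := by
  obtain ⟨β₀, hC⟩ := exists_mem_clause_iff (hw.trans (Fintype.card_fin k).symm) hnd
  obtain ⟨a, ha⟩ := exists_forall_ne_iff_of_length_filter_eq_one hC hs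
  obtain ⟨b, hb⟩ := exists_forall_ne_iff_of_length_filter_eq_one hC he
  have hab : a ≠ b := by
    rintro rfl
    exact hne (eq_of_forall_ne_iff ha hb)
  have hk : 1 < k := by simpa using Fintype.one_lt_card_iff.mpr ⟨a, b, hab⟩
  obtain ⟨K, rfl⟩ : ∃ K, k = K + 2 := ⟨k - 2, by omega⟩
  have hprob : probSatPair C s e =
      ∑ j ∈ range (K + 1), (1 / 4 : ℝ) * ((K.choose j : ℝ) / 2 ^ K) * avoidCaseSum j := by
    rw [probSatPair_eq_sum_powerset (satClause_iff_ne hC) ha hb,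
      sum_powerset_avoidProb_mul_avoidProb hab, Fintype.card_fin, Nat.add_sub_cancel, sum_div]
    refine sum_congr rfl fun j _ => ?_
    rw [pow_add]
    ring
  refine ⟨by simpa only [Nat.add_sub_cancel, avoidCaseSum] using hprob, ?_⟩
  rw [hprob]
  refine le_trans ?_ (one_sub_two_div_le_sum_avoidCaseSum K)
  have : 1 / ((K : ℝ) + 2) ≤ 1 / ((K : ℝ) + 1) := by gcongr; linarith
  rw [show ((K + 2 : ℕ) : ℝ) - 1 = K + 1 by push_cast; ring]
  push_cast
  linarith [show 2 / ((K : ℝ) + 2) = 1 / (K + 2) + 1 / (K + 2) by ring]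

/-- If `s` and `e` each make exactly one literal of the width-`k` clause
`C` (over `k` distinct variables) true and `s ≠ e`, then, with `K := k - 2`, the probability
that the random concatenated sequence `σ₁ ∘ σ₂` (through a uniformly random `γ`) satisfies
`C` equals `∑_{j=0}^{K} (1/4)·(C(K,j)/2^K)·[(j/(j+1))² + (j+1)/(j+2) + (j+1)/(j+2) + 1]`,
and this quantity is at least `1 - 1/(k-1) - 1/k`. -/
theorem stmt3 {k : ℕ} (hk : 3 ≤ k) (C : Clause (Fin k))
    (hw : C.length = k) (hnd : (C.map Prod.fst).Nodup)
    (s e : Fin k → Bool)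
    (hs : (C.filter fun l => s l.1 == l.2).length = 1)
    (he : (C.filter fun l => e l.1 == l.2).length = 1)
    (hne : s ≠ e) :
    probSatPair C s e =
      ∑ j ∈ Finset.range (k - 2 + 1),
        (1 / 4 : ℝ) * (((k - 2).choose j : ℝ) / 2 ^ (k - 2)) *
          (((j : ℝ) / ((j : ℝ) + 1)) ^ 2 + ((j : ℝ) + 1) / ((j : ℝ) + 2) +
            ((j : ℝ) + 1) / ((j : ℝ) + 2) + 1) ∧
    1 - 1 / ((k : ℝ) - 1) - 1 / (k : ℝ) ≤ probSatPair C s e :=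
  stmt3_general C hw hnd s e hs he hne
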